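/- arXiv:0801.4835 — 2 statements merged into one kernel-verified Lean document; each statement's English description precedes it below -/
import Mathlib

section
/- Let v_1, …, v_n ∈ ℝ^d be finitely many points and let k ∈ {0, …, d}. Then the k-th corner c_k of (v_1, …, v_n) lies in the tropical convex hull tconv{v_1, …, v_n}. -/
open Set

noncomputable section

/-- Extended (homogeneous) coordinates of a point of `TA^d ≅ ℝ^d`:
the 0-th coordinate is normalized to `0`. -/
def ext {d : ℕ} (x : Fin d → ℝ) : Fin (d + 1) → ℝ := Fin.cons 0 x

/-- The tropical combination of `(l, x)` and `(m, y)`. -/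
def tropComb {d : ℕ} (l m : ℝ) (x y : Fin d → ℝ) : Fin d → ℝ :=
  fun i => min (l + x i) (m + y i) - min l m

/-- A set is tropically convex if it is closed under tropical combinations. -/
def TropConvex {d : ℕ} (S : Set (Fin d → ℝ)) : Prop :=
  ∀ x ∈ S, ∀ y ∈ S, ∀ l m : ℝ, tropComb l m x y ∈ S

/-- The tropical convex hull: the intersection of all tropically convex supersets. -/
def tconv {d : ℕ} (V : Set (Fin d → ℝ)) : Set (Fin d → ℝ) :=
  ⋂₀ {S : Set (Fin d → ℝ) | TropConvex S ∧ V ⊆ S}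

/-- A tropical polytope is the tropical convex hull of a finite set. -/
def IsTropPolytope {d : ℕ} (P : Set (Fin d → ℝ)) : Prop :=
  ∃ V : Finset (Fin d → ℝ), P = tconv (V : Set (Fin d → ℝ))

/-- A polytrope is a tropical polytope which is also convex in the ordinary sense. -/
def IsPolytrope {d : ℕ} (P : Set (Fin d → ℝ)) : Prop :=
  IsTropPolytope P ∧ Convex ℝ P

/-- The `k`-th corner of the points `v_1, …, v_n`:
`(c_k)_j = min_i (v_{i,j} - v_{i,k}) - min_i (v_{i,0} - v_{i,k})` for `j = 1, …, d`
(homogeneous coordinates, `v_{i,0} := 0`). -/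
def corner {d n : ℕ} (v : Fin n → Fin d → ℝ) (k : Fin (d + 1)) : Fin d → ℝ :=
  fun j => (⨅ i, (ext (v i) j.succ - ext (v i) k)) - (⨅ i, (ext (v i) 0 - ext (v i) k))

/-!
The point `j ↦ min_i (l_i + v_{i,j}) - min_i l_i` is the tropical linear combination of the `v_i`
with coefficients `l_i`, normalized so that its 0-th homogeneous coordinate vanishes. Tropically
convex sets are closed under these, by induction on the number of points, and the `k`-th corner is
the one with coefficients `l_i = -v_{i,k}`.
-/

lemma subset_tconv {d : ℕ} (V : Set (Fin d → ℝ)) : V ⊆ tconv V :=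
  fun _ hx => mem_sInter.2 fun _ hS => hS.2 hx

lemma tropConvex_tconv {d : ℕ} (V : Set (Fin d → ℝ)) : TropConvex (tconv V) :=
  fun _ hx _ hy l m => mem_sInter.2 fun S hS =>
    hS.1 _ (mem_sInter.1 hx S hS) _ (mem_sInter.1 hy S hS) l m

theorem TropConvex.inf'_sub_inf'_mem {d : ℕ} {ι : Type*} {S : Set (Fin d → ℝ)}
    (hS : TropConvex S) {s : Finset ι} (hs : s.Nonempty) (l : ι → ℝ) {v : ι → Fin d → ℝ}
    (hv : ∀ i ∈ s, v i ∈ S) :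
    (fun j => s.inf' hs (fun i => l i + v i j) - s.inf' hs l) ∈ S := by
  induction hs using Finset.Nonempty.cons_induction with
  | singleton a =>
    simpa only [Finset.inf'_singleton, add_sub_cancel_left] using hv a (Finset.mem_singleton_self a)
  | cons a s ha hs ih =>
    have hx := ih fun i hi => hv i (Finset.mem_cons_of_mem hi)
    -- adding `a` is the tropical combination of the previous point, weighted by `min_{i ∈ s} l i`,
    -- with `v a`, weighted by `l a`
    convert hS _ hx _ (hv a (Finset.mem_cons_self a s)) (s.inf' hs l) (l a) using 1
    funext j
    simp only [tropComb, Finset.inf'_cons hs, add_sub_cancel, min_comm]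

lemma corner_eq_inf'_sub_inf' {d n : ℕ} [Nonempty (Fin n)] (v : Fin n → Fin d → ℝ)
    (k : Fin (d + 1)) :
    corner v k = fun j => Finset.univ.inf' Finset.univ_nonempty
        (fun i => -ext (v i) k + v i j) -
      Finset.univ.inf' Finset.univ_nonempty (fun i => -ext (v i) k) := by
  funext j
  simp only [corner, Finset.inf'_univ_eq_ciInf, _root_.ext, Fin.cons_succ, Fin.cons_zero, zero_sub,
    neg_add_eq_sub]

/-- Each corner of a finite point sequence lies in its tropical convex hull. -/
theorem corner_mem_tconv {d n : ℕ} (hn : 0 < n) (v : Fin n → Fin d → ℝ)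
    (k : Fin (d + 1)) :
    corner v k ∈ tconv (Set.range v) := by
  have : Nonempty (Fin n) := Fin.pos_iff_nonempty.1 hn
  rw [corner_eq_inf'_sub_inf']
  exact (tropConvex_tconv _).inf'_sub_inf'_mem _ _ fun i _ => subset_tconv _ (mem_range_self i)
end
end

section
/- Let v_1, …, v_n ∈ ℝ^d be finitely many points, let k ∈ {0, …, d}, and let c_k be the k-th corner of (v_1, …, v_n). Then tconv{v_1, …, v_n} ⊆ c_k + S̄_k; explicitly, every x ∈ tconv{v_1, …, v_n} satisfies x_k − (c_k)_k ≤ x_j − (c_k)_j for all j ∈ {0, …, d} (with x_0 := 0 and (c_k)_0 := 0). -/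
open Set

noncomputable section

/-- The closed sector `a + S̄_k`, in homogeneous coordinates. -/
def closedSector {d : ℕ} (a : Fin d → ℝ) (k : Fin (d + 1)) : Set (Fin d → ℝ) :=
  {x | ∀ j, ext x k - ext a k ≤ ext x j - ext a j}

lemma ext_tropComb {d : ℕ} (l m : ℝ) (x y : Fin d → ℝ) (j : Fin (d + 1)) :
    ext (tropComb l m x y) j = min (l + ext x j) (m + ext y j) - min l m := by
  induction j using Fin.cases with
  | zero => simp [_root_.ext]
  | succ j => simp [_root_.ext, tropComb]

lemma tconv_subset_of_tropConvex {d : ℕ} {V S : Set (Fin d → ℝ)} (hS : TropConvex S)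
    (hVS : V ⊆ S) : tconv V ⊆ S :=
  sInter_subset_of_mem ⟨hS, hVS⟩

lemma tropConvex_closedSector {d : ℕ} (a : Fin d → ℝ) (k : Fin (d + 1)) :
    TropConvex (closedSector a k) := by
  intro x hx y hy l m j
  have hmin : min (l + ext x k) (m + ext y k) + (ext a j - ext a k) ≤
      min (l + ext x j) (m + ext y j) := by
    rw [← min_add_add_right]
    exact min_le_min (by linarith [hx j]) (by linarith [hy j])
  simp only [ext_tropComb]
  linarith

lemma ext_corner {d n : ℕ} (v : Fin n → Fin d → ℝ) (k j : Fin (d + 1)) :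
    ext (corner v k) j =
      (⨅ i, (ext (v i) j - ext (v i) k)) - ⨅ i, (ext (v i) 0 - ext (v i) k) := by
  induction j using Fin.cases with
  | zero => simp [_root_.ext]
  | succ j => rfl

lemma range_subset_closedSector_corner {d n : ℕ} (v : Fin n → Fin d → ℝ) (k : Fin (d + 1)) :
    range v ⊆ closedSector (corner v k) k := by
  rintro _ ⟨i, rfl⟩ j
  have : Nonempty (Fin n) := ⟨i⟩
  have hk : ⨅ i, (ext (v i) k - ext (v i) k) = 0 := by
    simp only [sub_self, ciInf_const]
  have hj : ⨅ i, (ext (v i) j - ext (v i) k) ≤ ext (v i) j - ext (v i) k :=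
    ciInf_le (finite_range _).bddBelow i
  rw [ext_corner, ext_corner, hk]
  linarith

theorem tconv_subset_cornered_halfspace_general {d n : ℕ}
    (v : Fin n → Fin d → ℝ) (k : Fin (d + 1)) :
    ∀ x ∈ tconv (Set.range v), ∀ j : Fin (d + 1),
      ext x k - ext (corner v k) k ≤ ext x j - ext (corner v k) j :=
  fun _ hx =>
    tconv_subset_of_tropConvex (tropConvex_closedSector _ k)
      (range_subset_closedSector_corner v k) hx

/-- The tropical convex hull of `v_1, …, v_n` is contained in the cornered
tropical halfspace `c_k + S̄_k`: every `x ∈ tconv{v_1,…,v_n}` satisfies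
`x_k - (c_k)_k ≤ x_j - (c_k)_j` for all `j` (homogeneous coordinates). -/
theorem tconv_subset_cornered_halfspace {d n : ℕ} (hn : 0 < n)
    (v : Fin n → Fin d → ℝ) (k : Fin (d + 1)) :
    ∀ x ∈ tconv (Set.range v), ∀ j : Fin (d + 1),
      ext x k - ext (corner v k) k ≤ ext x j - ext (corner v k) j :=
  tconv_subset_cornered_halfspace_general v k
end
end
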